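/- arXiv:2601.17464 — 7 statements merged into one kernel-verified Lean document; each statement's English description precedes it below -/
import Mathlib

section
/- Let n, ρ ∈ ℕ, let M : ℝ → ℝ^{n×n}, S : ℝ → ℝ^{ρ×ρ} and N : ℝ → ℝ^{n×ρ} be continuous, let Φ_M and Φ_S be transition matrices of M and S respectively, and fix t₀ ∈ ℝ. Then a differentiable map Π : ℝ → ℝ^{n×ρ} satisfies the Sylvester differential equation Π'(t) + Π(t)·S(t) = M(t)·Π(t) + N(t) for all t ∈ ℝ if and only if Π(t) = Φ_M(t,t₀)·Π(t₀)·Φ_S(t₀,t) + ∫_{t₀}^{t} Φ_M(t,τ)·N(τ)·Φ_S(τ,t) dτ for all t ∈ ℝ. -/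
open Matrix MeasureTheory Filter intervalIntegral

attribute [local instance] Matrix.frobeniusNormedAddCommGroup Matrix.frobeniusNormedSpace

/-- A transition matrix of a continuous matrix-valued map `A`. -/
structure IsTransitionMatrix {ι : Type*} [Fintype ι] [DecidableEq ι]
    (A : ℝ → Matrix ι ι ℝ) (Φ : ℝ → ℝ → Matrix ι ι ℝ) : Prop where
  refl : ∀ s, Φ s s = 1
  comp : ∀ t s r, Φ t s * Φ s r = Φ t r
  hasDerivAt_fst : ∀ s t, HasDerivAt (fun u => Φ u s) (A t * Φ t s) t
  hasDerivAt_snd : ∀ t s, HasDerivAt (fun u => Φ t u) (-(Φ t s * A s)) s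

section helpers

variable {ι κ l : Type*} [Fintype ι] [Fintype κ] [Fintype l] [DecidableEq ι] [DecidableEq κ]

/-- Matrix multiplication as a continuous bilinear map (frobenius norm). -/
noncomputable def matMulCLM (ι κ l : Type*) [Fintype ι] [Fintype κ] [Fintype l] :
    Matrix ι κ ℝ →L[ℝ] Matrix κ l ℝ →L[ℝ] Matrix ι l ℝ :=
  LinearMap.mkContinuous₂
    (LinearMap.mk₂ ℝ (· * ·) Matrix.add_mul (fun c A B => Matrix.smul_mul c A B)
      Matrix.mul_add (fun c A B => Matrix.mul_smul A c B))
    1 (fun A B => by simpa using Matrix.frobenius_norm_mul A B)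

@[simp] lemma matMulCLM_apply (A : Matrix ι κ ℝ) (B : Matrix κ l ℝ) :
    matMulCLM ι κ l A B = A * B := rfl

lemma hasDerivAt_matrix_iff {m n' : Type*} [Fintype m] [Fintype n'] {F : ℝ → Matrix m n' ℝ}
    {F' : Matrix m n' ℝ} {t : ℝ} :
    HasDerivAt F F' t ↔ ∀ i j, HasDerivAt (fun s => F s i j) (F' i j) t :=
  (hasDerivAt_pi (φ := F) (φ' := F')).trans (forall_congr' fun _ => hasDerivAt_pi)

instance matrix_pseudoMetrizable (m n' : Type*) [Fintype m] [Fintype n'] :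
    TopologicalSpace.PseudoMetrizableSpace (Matrix m n' ℝ) :=
  inferInstanceAs (TopologicalSpace.PseudoMetrizableSpace (m → n' → ℝ))

lemma HasDerivAt.matmul {f : ℝ → Matrix ι κ ℝ} {g : ℝ → Matrix κ l ℝ}
    {f' : Matrix ι κ ℝ} {g' : Matrix κ l ℝ} {t : ℝ}
    (hf : HasDerivAt f f' t) (hg : HasDerivAt g g' t) :
    HasDerivAt (fun s => f s * g s) (f' * g t + f t * g') t := by
  rw [hasDerivAt_matrix_iff] at hf hg ⊢
  intro i j
  simp only [Matrix.mul_apply, Matrix.add_apply]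
  rw [← Finset.sum_add_distrib]
  exact HasDerivAt.fun_sum (fun k _ => (hf i k).mul (hg k j))

lemma Continuous.matmul {f : ℝ → Matrix ι κ ℝ} {g : ℝ → Matrix κ l ℝ}
    (hf : Continuous f) (hg : Continuous g) :
    Continuous fun s => f s * g s :=
  (matMulCLM ι κ l).continuous₂.comp (hf.prodMk hg)

lemma conj_reduce (U U' : Matrix ι ι ℝ) (V V' : Matrix κ κ ℝ)
    (hU : U' * U = 1) (hV : V * V' = 1) (X : Matrix ι κ ℝ) :
    U' * (U * X * V) * V' = X := by
  rw [show U * X * V = U * (X * V) from Matrix.mul_assoc _ _ _,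
    ← Matrix.mul_assoc U' U, hU, Matrix.one_mul, Matrix.mul_assoc X V V', hV, Matrix.mul_one]

lemma conj_inj (U U' : Matrix ι ι ℝ) (V V' : Matrix κ κ ℝ)
    (hU : U' * U = 1) (hV : V * V' = 1) {X Y : Matrix ι κ ℝ}
    (h : U * X * V = U * Y * V) : X = Y := by
  have h2 := congrArg (fun Z => U' * Z * V') h
  simpa only [conj_reduce U U' V V' hU hV] using h2

lemma conj_cancel (U U' : Matrix ι ι ℝ) (V V' : Matrix κ κ ℝ)
    (hU : U' * U = 1) (hU' : U * U' = 1) (hV : V * V' = 1) (hV' : V' * V = 1)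
    (X C : Matrix ι κ ℝ) : X = U * C * V ↔ U' * X * V' = C := by
  constructor
  · rintro rfl
    exact conj_reduce U U' V V' hU hV C
  · intro h
    rw [← h]
    exact (conj_reduce U' U V' V hU' hV' X).symm

end helpers

/-- a differentiable `Π` solves the Sylvester differential equation
`Π'(t) + Π(t)·S(t) = M(t)·Π(t) + N(t)` iff it is given by the variation-of-constants
formula built from the transition matrices of `M` and `S`. -/
theorem sylvester_ode_iff_integral_repr {n ρ : ℕ}
    (M : ℝ → Matrix (Fin n) (Fin n) ℝ) (S : ℝ → Matrix (Fin ρ) (Fin ρ) ℝ)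
    (N : ℝ → Matrix (Fin n) (Fin ρ) ℝ)
    (hM : Continuous M) (hS : Continuous S) (hN : Continuous N)
    (ΦM : ℝ → ℝ → Matrix (Fin n) (Fin n) ℝ) (ΦS : ℝ → ℝ → Matrix (Fin ρ) (Fin ρ) ℝ)
    (hΦM : IsTransitionMatrix M ΦM) (hΦS : IsTransitionMatrix S ΦS)
    (t₀ : ℝ)
    (P : ℝ → Matrix (Fin n) (Fin ρ) ℝ) (hP : Differentiable ℝ P) :
    (∀ t, deriv P t + P t * S t = M t * P t + N t) ↔
      (∀ t, P t = ΦM t t₀ * P t₀ * ΦS t₀ t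
        + ∫ τ in t₀..t, ΦM t τ * N τ * ΦS τ t) := by
  set g : ℝ → Matrix (Fin n) (Fin ρ) ℝ := fun τ => ΦM t₀ τ * N τ * ΦS τ t₀ with hgdef
  have hdM : Differentiable ℝ (ΦM t₀) := fun τ => (hΦM.hasDerivAt_snd t₀ τ).differentiableAt
  have hcM : Continuous (ΦM t₀) := hdM.continuous
  have hdS : Differentiable ℝ (fun τ => ΦS τ t₀) :=
    fun τ => (hΦS.hasDerivAt_fst t₀ τ).differentiableAt
  have hcS : Continuous (fun τ => ΦS τ t₀) := hdS.continuous
  have hgc : Continuous g := (hcM.matmul hN).matmul hcS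
  have hgi := fun a b : ℝ => hgc.intervalIntegrable (μ := volume) a b
  -- inverse relations
  have hM1 : ∀ t, ΦM t₀ t * ΦM t t₀ = 1 := fun t => by rw [hΦM.comp, hΦM.refl]
  have hM2 : ∀ t, ΦM t t₀ * ΦM t₀ t = 1 := fun t => by rw [hΦM.comp, hΦM.refl]
  have hS1 : ∀ t, ΦS t₀ t * ΦS t t₀ = 1 := fun t => by rw [hΦS.comp, hΦS.refl]
  have hS2 : ∀ t, ΦS t t₀ * ΦS t₀ t = 1 := fun t => by rw [hΦS.comp, hΦS.refl]
  -- the conjugated solution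
  set Q : ℝ → Matrix (Fin n) (Fin ρ) ℝ := fun s => ΦM t₀ s * P s * ΦS s t₀ with hQdef
  have hQd : ∀ t, HasDerivAt Q
      (ΦM t₀ t * (deriv P t + P t * S t - M t * P t) * ΦS t t₀) t := by
    intro t
    have h1 : HasDerivAt (fun s => ΦM t₀ s * P s)
        (-(ΦM t₀ t * M t) * P t + ΦM t₀ t * deriv P t) t :=
      (hΦM.hasDerivAt_snd t₀ t).matmul (hP t).hasDerivAt
    have h2 := h1.matmul (hΦS.hasDerivAt_fst t₀ t)
    convert h2 using 1
    simp only [Matrix.mul_add, Matrix.add_mul, Matrix.mul_sub, Matrix.sub_mul,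
      Matrix.neg_mul, Matrix.mul_neg, Matrix.mul_assoc, sub_eq_add_neg]
    abel
  -- FTC
  have hftc : ∀ t, HasDerivAt (fun u => ∫ τ in t₀..u, g τ) (g t) t := fun t =>
    intervalIntegral.integral_hasDerivAt_right (hgi t₀ t)
      (hgc.stronglyMeasurableAtFilter _ _) hgc.continuousAt
  have hQt₀ : Q t₀ = P t₀ := by
    simp [hQdef, hΦM.refl, hΦS.refl]
  have key : (∀ t, deriv P t + P t * S t = M t * P t + N t) ↔
      ∀ t, Q t = P t₀ + ∫ τ in t₀..t, g τ := by
    constructor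
    · intro hode
      have hQg : ∀ t, HasDerivAt Q (g t) t := by
        intro t
        have hsub : deriv P t + P t * S t - M t * P t = N t := by
          rw [hode t]; abel
        have := hQd t
        rw [hsub] at this
        exact this
      intro t
      have hconst : ∀ u, HasDerivAt (fun v => Q v - ∫ τ in t₀..v, g τ) 0 u := fun u => by
        have h := (hQg u).sub (hftc u)
        rw [sub_self] at h
        exact h
      have hdiff : Differentiable ℝ (fun v => Q v - ∫ τ in t₀..v, g τ) :=
        fun u => (hconst u).differentiableAt
      have hc := is_const_of_deriv_eq_zero hdiff (fun x => (hconst x).deriv) t t₀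
      simp only [intervalIntegral.integral_same, sub_zero] at hc
      rw [← hQt₀, ← hc]
      abel
    · intro hB t
      have hQg : HasDerivAt Q (g t) t := by
        have hfun : Q = fun u => P t₀ + ∫ τ in t₀..u, g τ := funext hB
        rw [hfun]
        exact (hftc t).const_add (P t₀)
      have huniq := (hQd t).unique hQg
      have hND : deriv P t + P t * S t - M t * P t = N t :=
        conj_inj (ΦM t₀ t) (ΦM t t₀) (ΦS t t₀) (ΦS t₀ t) (hM2 t) (hS2 t) huniq
      have := sub_eq_iff_eq_add.mp hND
      rw [this]; abel
  rw [key]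
  apply forall_congr'
  intro t
  have hK : ΦM t t₀ * (P t₀ + ∫ τ in t₀..t, g τ) * ΦS t₀ t
      = ΦM t t₀ * P t₀ * ΦS t₀ t + ∫ τ in t₀..t, ΦM t τ * N τ * ΦS τ t := by
    set L : Matrix (Fin n) (Fin ρ) ℝ →L[ℝ] Matrix (Fin n) (Fin ρ) ℝ :=
      ((matMulCLM (Fin n) (Fin ρ) (Fin ρ)).flip (ΦS t₀ t)).comp
        (matMulCLM (Fin n) (Fin n) (Fin ρ) (ΦM t t₀)) with hLdef
    have hLap : ∀ X : Matrix (Fin n) (Fin ρ) ℝ, L X = ΦM t t₀ * X * ΦS t₀ t := fun X => rfl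
    rw [Matrix.mul_add, Matrix.add_mul]
    congr 1
    calc ΦM t t₀ * (∫ τ in t₀..t, g τ) * ΦS t₀ t = L (∫ τ in t₀..t, g τ) := rfl
      _ = ∫ τ in t₀..t, L (g τ) := (L.intervalIntegral_comp_comm (hgi t₀ t)).symm
      _ = ∫ τ in t₀..t, ΦM t τ * N τ * ΦS τ t := by
          apply intervalIntegral.integral_congr
          intro τ _
          show ΦM t t₀ * (ΦM t₀ τ * N τ * ΦS τ t₀) * ΦS t₀ t = ΦM t τ * N τ * ΦS τ t
          rw [← Matrix.mul_assoc (ΦM t t₀), ← Matrix.mul_assoc (ΦM t t₀), hΦM.comp,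
            Matrix.mul_assoc (ΦM t τ * N τ), hΦS.comp]
  have hcc := conj_cancel (ΦM t t₀) (ΦM t₀ t) (ΦS t₀ t) (ΦS t t₀)
    (hM1 t) (hM2 t) (hS1 t) (hS2 t) (P t) (P t₀ + ∫ τ in t₀..t, g τ)
  rw [hK] at hcc
  exact hcc.symm
end

section
/- Let m, ρ ∈ ℕ and let η ∈ ℝ^{m×m}, S ∈ ℝ^{ρ×ρ}, K ∈ ℝ^{m×ρ} be constant matrices. Then there exists a differentiable map Π : ℝ → ℝ^{m×ρ} with sup_{t∈ℝ} ‖Π(t)‖ < ∞ satisfying Π'(t) = η·Π(t) − Π(t)·S + K for all t ∈ ℝ if and only if there exists a constant matrix X ∈ ℝ^{m×ρ} with η·X − X·S + K = 0. (The nontrivial direction is obtained by a Cesàro-averaging and Bolzano–Weierstrass argument: subsequential limits of the averages (1/(nT))∫_{t₀}^{t₀+nT} Π(τ) dτ solve the constant Sylvester equation.) -/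
open Matrix MeasureTheory Filter

attribute [local instance] Matrix.frobeniusNormedAddCommGroup Matrix.frobeniusNormedSpace

/-- a constant-coefficient Sylvester differential equation
`Π' = η·Π − Π·S + K` has a uniformly bounded differentiable solution on ℝ if and only if
the constant Sylvester equation `η·X − X·S + K = 0` has a solution. -/
theorem bounded_sylvester_solution_iff_constant_solution {m ρ : ℕ}
    (η : Matrix (Fin m) (Fin m) ℝ) (S : Matrix (Fin ρ) (Fin ρ) ℝ)
    (K : Matrix (Fin m) (Fin ρ) ℝ) :
    (∃ P : ℝ → Matrix (Fin m) (Fin ρ) ℝ, Differentiable ℝ P ∧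
      (∃ C : ℝ, ∀ t, ‖P t‖ ≤ C) ∧
      ∀ t, deriv P t = η * P t - P t * S + K) ↔
    (∃ X : Matrix (Fin m) (Fin ρ) ℝ, η * X - X * S + K = 0) := by
  constructor
  · rintro ⟨P, hdiff, ⟨C, hC⟩, hode⟩
    have hC0 : 0 ≤ C := le_trans (norm_nonneg _) (hC 0)
    have hPcont : Continuous P := hdiff.continuous
    -- the Sylvester linear map
    set L : Matrix (Fin m) (Fin ρ) ℝ →ₗ[ℝ] Matrix (Fin m) (Fin ρ) ℝ :=
      { toFun := fun A => η * A - A * S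
        map_add' := by intro A B; simp [Matrix.mul_add, Matrix.add_mul]; abel
        map_smul' := by intro c A; simp [Matrix.mul_smul, Matrix.smul_mul, smul_sub] } with hL
    set Lc : Matrix (Fin m) (Fin ρ) ℝ →L[ℝ] Matrix (Fin m) (Fin ρ) ℝ :=
      L.toContinuousLinearMap with hLc
    have hLcapp : ∀ A, Lc A = η * A - A * S := fun A => rfl
    -- fundamental theorem of calculus
    have key : ∀ n : ℕ, P ((n : ℝ) + 1) - P 0
        = Lc (∫ t in (0:ℝ)..((n:ℝ)+1), P t) + ((n:ℝ)+1) • K := by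
      intro n
      have h1 : (∫ t in (0:ℝ)..((n:ℝ)+1), deriv P t) = P ((n:ℝ)+1) - P 0 := by
        apply intervalIntegral.integral_deriv_eq_sub (fun t _ => hdiff t)
        have : Continuous (deriv P) := by
          have : deriv P = fun t => η * P t - P t * S + K := funext hode
          rw [this]
          exact ((Lc.continuous.comp hPcont).add continuous_const)
        exact this.intervalIntegrable _ _
      have h2 : (∫ t in (0:ℝ)..((n:ℝ)+1), deriv P t)
          = Lc (∫ t in (0:ℝ)..((n:ℝ)+1), P t) + ((n:ℝ)+1) • K := by
        have hint := (Lc.continuous.comp hPcont).intervalIntegrable (μ := volume) 0 ((n:ℝ)+1)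
        have : (∫ t in (0:ℝ)..((n:ℝ)+1), deriv P t)
            = (∫ t in (0:ℝ)..((n:ℝ)+1), Lc (P t)) + ∫ t in (0:ℝ)..((n:ℝ)+1), K := by
          rw [← intervalIntegral.integral_add (f := fun t => Lc (P t)) hint (intervalIntegrable_const)]
          congr 1; funext t; rw [hode t]; rfl
        rw [this, show (∫ t in (0:ℝ)..((n:ℝ)+1), Lc (P t)) = Lc (∫ t in (0:ℝ)..((n:ℝ)+1), P t) from
            Lc.intervalIntegral_comp_comm (hPcont.intervalIntegrable _ _),
          intervalIntegral.integral_const, sub_zero]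
      rw [← h1, h2]
    -- Cesàro averages
    set a : ℕ → Matrix (Fin m) (Fin ρ) ℝ :=
      fun n => ((n:ℝ)+1)⁻¹ • ∫ t in (0:ℝ)..((n:ℝ)+1), P t with ha
    have hTpos : ∀ n : ℕ, (0:ℝ) < (n:ℝ)+1 := fun n => by positivity
    have haball : ∀ n, a n ∈ Metric.closedBall (0 : Matrix (Fin m) (Fin ρ) ℝ) C := by
      intro n
      rw [Metric.mem_closedBall, dist_zero_right]
      have hInt : ‖∫ t in (0:ℝ)..((n:ℝ)+1), P t‖ ≤ C * |((n:ℝ)+1) - 0| :=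
        intervalIntegral.norm_integral_le_of_norm_le_const (fun t _ => hC t)
      rw [ha]
      calc ‖((n:ℝ)+1)⁻¹ • ∫ t in (0:ℝ)..((n:ℝ)+1), P t‖
          = ((n:ℝ)+1)⁻¹ * ‖∫ t in (0:ℝ)..((n:ℝ)+1), P t‖ := by
            rw [norm_smul, Real.norm_eq_abs, abs_of_pos (inv_pos.mpr (hTpos n))]
        _ ≤ ((n:ℝ)+1)⁻¹ * (C * |((n:ℝ)+1) - 0|) := by
            apply mul_le_mul_of_nonneg_left hInt (le_of_lt (inv_pos.mpr (hTpos n)))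
        _ = C := by
            rw [sub_zero, abs_of_pos (hTpos n)]; field_simp
    -- equation for the averages
    have haeq : ∀ n, Lc (a n) + K = ((n:ℝ)+1)⁻¹ • (P ((n:ℝ)+1) - P 0) := by
      intro n
      rw [key n, smul_add, smul_smul, inv_mul_cancel₀ (ne_of_gt (hTpos n)), one_smul]
      simp only [ha]
      rw [ContinuousLinearMap.map_smul]
    -- Lc (a n) + K → 0
    have htend0 : Tendsto (fun n => Lc (a n) + K) atTop (nhds 0) := by
      refine tendsto_zero_iff_norm_tendsto_zero.mpr ?_
      have hbound : ∀ n : ℕ, ‖Lc (a n) + K‖ ≤ ((n:ℝ)+1)⁻¹ * (2*C) := by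
        intro n
        rw [haeq n, norm_smul, Real.norm_eq_abs, abs_of_pos (inv_pos.mpr (hTpos n))]
        apply mul_le_mul_of_nonneg_left _ (le_of_lt (inv_pos.mpr (hTpos n)))
        calc ‖P ((n:ℝ)+1) - P 0‖ ≤ ‖P ((n:ℝ)+1)‖ + ‖P 0‖ := norm_sub_le _ _
          _ ≤ C + C := add_le_add (hC _) (hC _)
          _ = 2 * C := by ring
      have hg : Tendsto (fun n : ℕ => ((n:ℝ)+1)⁻¹ * (2*C)) atTop (nhds 0) := by
        have h1 : Tendsto (fun n : ℕ => ((n:ℝ)+1)⁻¹) atTop (nhds 0) :=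
          tendsto_one_div_add_atTop_nhds_zero_nat.congr (fun n => by rw [one_div])
        simpa using h1.mul_const (2*C)
      exact squeeze_zero (fun n => norm_nonneg _) hbound hg
    -- extract a convergent subsequence
    obtain ⟨X, _, φ, hφ, hconv⟩ :=
      (isCompact_closedBall (0 : Matrix (Fin m) (Fin ρ) ℝ) C).tendsto_subseq haball
    refine ⟨X, ?_⟩
    have h1 : Tendsto (fun k => Lc (a (φ k)) + K) atTop (nhds (Lc X + K)) :=
      ((Lc.continuous.tendsto X).comp hconv).add tendsto_const_nhds
    have h2 : Tendsto (fun k => Lc (a (φ k)) + K) atTop (nhds 0) :=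
      htend0.comp hφ.tendsto_atTop
    have := tendsto_nhds_unique h1 h2
    rw [hLcapp] at this
    exact this
  · rintro ⟨X, hX⟩
    refine ⟨fun _ => X, differentiable_const X, ⟨‖X‖, fun _ => le_refl _⟩, fun t => ?_⟩
    rw [show deriv (fun _ : ℝ => X) t = 0 from deriv_const t X, ← hX]
end

section
/- Let ν, ν' ∈ ℕ, let F : ℝ → ℝ^{ν×ν} and F' : ℝ → ℝ^{ν'×ν'} be continuous with transition matrices Φ_F and Φ_{F'} respectively, let H : ℝ → ℝ^{1×ν} and H' : ℝ → ℝ^{1×ν'} be continuous, fix t₀ ∈ ℝ, and suppose L : ℝ → ℝ^{ν'×ν} is differentiable with L'(t) + L(t)·F(t) = F'(t)·L(t) and H(t) = H'(t)·L(t) for all t ∈ ℝ. Then L(t) = Φ_{F'}(t,t₀)·L(t₀)·Φ_F(t₀,t) for all t ∈ ℝ, and consequently H(t)·Φ_F(t,t₀) = H'(t)·Φ_{F'}(t,t₀)·L(t₀) for all t ∈ ℝ. -/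
open Matrix MeasureTheory Filter

attribute [local instance] Matrix.frobeniusNormedAddCommGroup Matrix.frobeniusNormedSpace

private lemma matrix_mul_isBoundedBilinearMap {l m n : Type*} [Fintype l] [Fintype m] [Fintype n] :
    IsBoundedBilinearMap ℝ (fun p : Matrix l m ℝ × Matrix m n ℝ => p.1 * p.2) where
  add_left x₁ x₂ y := Matrix.add_mul x₁ x₂ y
  smul_left c x y := Matrix.smul_mul c x y
  add_right x y₁ y₂ := Matrix.mul_add x y₁ y₂
  smul_right c x y := Matrix.mul_smul x c y
  bound := ⟨1, one_pos, fun x y => by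
    simpa using Matrix.frobenius_norm_mul x y⟩

private lemma HasDerivAt.matrix_mul {l m n : Type*} [Fintype l] [Fintype m] [Fintype n]
    {A : ℝ → Matrix l m ℝ} {B : ℝ → Matrix m n ℝ} {A' : Matrix l m ℝ} {B' : Matrix m n ℝ}
    {t : ℝ} (hA : HasDerivAt A A' t) (hB : HasDerivAt B B' t) :
    HasDerivAt (fun u => A u * B u) (A t * B' + A' * B t) t := by
  have hAB : HasDerivAt (fun u => (A u, B u)) (A', B') t := hA.prodMk hB
  have hbb := @matrix_mul_isBoundedBilinearMap l m n _ _ _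
  have h : HasDerivAt ((fun p : Matrix l m ℝ × Matrix m n ℝ => p.1 * p.2) ∘ (fun u => (A u, B u)))
      (hbb.deriv (A t, B t) (A', B')) t :=
    (hbb.hasFDerivAt (A t, B t)).comp_hasDerivAt t hAB
  simpa [Function.comp_def] using h

/-- a differentiable `L` with `L' + L·F = F'·L` and `H = H'·L` satisfies
`L(t) = Φ_{F'}(t,t₀)·L(t₀)·Φ_F(t₀,t)`, hence `H(t)·Φ_F(t,t₀) = H'(t)·Φ_{F'}(t,t₀)·L(t₀)`. -/
theorem immersion_relation_solution {ν ν' : ℕ}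
    (F : ℝ → Matrix (Fin ν) (Fin ν) ℝ) (F' : ℝ → Matrix (Fin ν') (Fin ν') ℝ)
    (hF : Continuous F) (hF' : Continuous F')
    (ΦF : ℝ → ℝ → Matrix (Fin ν) (Fin ν) ℝ) (ΦF' : ℝ → ℝ → Matrix (Fin ν') (Fin ν') ℝ)
    (hΦF : IsTransitionMatrix F ΦF) (hΦF' : IsTransitionMatrix F' ΦF')
    (H : ℝ → Matrix (Fin 1) (Fin ν) ℝ) (H' : ℝ → Matrix (Fin 1) (Fin ν') ℝ)
    (hH : Continuous H) (hH' : Continuous H')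
    (t₀ : ℝ)
    (L : ℝ → Matrix (Fin ν') (Fin ν) ℝ) (hL : Differentiable ℝ L)
    (hLode : ∀ t, deriv L t + L t * F t = F' t * L t)
    (hHL : ∀ t, H t = H' t * L t) :
    (∀ t, L t = ΦF' t t₀ * L t₀ * ΦF t₀ t) ∧
    (∀ t, H t * ΦF t t₀ = H' t * ΦF' t t₀ * L t₀) := by
  set M : ℝ → Matrix (Fin ν') (Fin ν) ℝ := fun t => ΦF' t₀ t * (L t * ΦF t t₀) with hM
  have hderiv : ∀ t, HasDerivAt M 0 t := by
    intro t
    have hLd : HasDerivAt L (F' t * L t - L t * F t) t := by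
      have := (hL t).hasDerivAt
      have e : deriv L t = F' t * L t - L t * F t := by
        rw [eq_sub_iff_add_eq]; exact hLode t
      exact this.congr_deriv e
    have h1 := (hLd.matrix_mul (hΦF.hasDerivAt_fst t₀ t))
    have h2 := (hΦF'.hasDerivAt_snd t₀ t).matrix_mul h1
    convert h2 using 1
    simp only [Matrix.mul_add, Matrix.mul_sub, Matrix.sub_mul, Matrix.mul_assoc, Matrix.neg_mul,
      Matrix.mul_neg]
    abel
  have hconst : ∀ t, M t = M t₀ := by
    intro t
    exact is_const_of_deriv_eq_zero (fun u => (hderiv u).differentiableAt)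
      (fun u => (hderiv u).deriv) t t₀
  have hMt₀ : M t₀ = L t₀ := by
    simp [hM, hΦF'.refl, hΦF.refl]
  have key : ∀ t, L t = ΦF' t t₀ * L t₀ * ΦF t₀ t := by
    intro t
    have h := hconst t
    rw [hMt₀] at h
    calc L t = (ΦF' t t₀ * ΦF' t₀ t) * L t * (ΦF t t₀ * ΦF t₀ t) := by
            rw [hΦF'.comp, hΦF.comp, hΦF'.refl, hΦF.refl, Matrix.one_mul, Matrix.mul_one]
      _ = ΦF' t t₀ * (ΦF' t₀ t * (L t * ΦF t t₀)) * ΦF t₀ t := by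
            simp only [Matrix.mul_assoc]
      _ = ΦF' t t₀ * L t₀ * ΦF t₀ t := by
            have h' : ΦF' t₀ t * (L t * ΦF t t₀) = L t₀ := h
            rw [h']
  refine ⟨key, fun t => ?_⟩
  rw [hHL t, key t]
  simp only [Matrix.mul_assoc, hΦF.comp, hΦF.refl, Matrix.mul_one]
end

section
/- Let ν ∈ ℕ, let F : ℝ → ℝ^{ν×ν} be continuous with transition matrix Φ_F, let α > 0, and define F_im(t) := −α·I − F(t)ᵀ. Then the map Ψ(t,s) := e^{−α(t−s)}·(Φ_F(s,t))ᵀ is a transition matrix of F_im: Ψ(s,s) = I, Ψ(t,s)·Ψ(s,r) = Ψ(t,r), and for each fixed s the map t ↦ Ψ(t,s) is differentiable with derivative F_im(t)·Ψ(t,s). Moreover, if there is φ > 0 with ‖(Φ_F(s,t))ᵀ‖ ≤ φ for all s, t ∈ ℝ, then ‖Ψ(t,s)‖ ≤ φ·e^{−α(t−s)} for all t ≥ s, so F_im is uniformly exponentially stable. -/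
open Matrix MeasureTheory Filter

attribute [local instance] Matrix.frobeniusNormedAddCommGroup Matrix.frobeniusNormedSpace

private noncomputable def transposeCLM (ν : ℕ) :
    Matrix (Fin ν) (Fin ν) ℝ →L[ℝ] Matrix (Fin ν) (Fin ν) ℝ :=
  LinearMap.toContinuousLinearMap
    (Matrix.transposeLinearEquiv (Fin ν) (Fin ν) ℝ ℝ).toLinearMap

private lemma hasDerivAt_transpose {ν : ℕ} {f : ℝ → Matrix (Fin ν) (Fin ν) ℝ}
    {f' : Matrix (Fin ν) (Fin ν) ℝ} {t : ℝ} (hf : HasDerivAt f f' t) :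
    HasDerivAt (fun u => (f u)ᵀ) f'ᵀ t := by
  have := (transposeCLM ν).hasFDerivAt.comp_hasDerivAt t hf
  exact this

/-- `Ψ(t,s) = e^{−α(t−s)}·(Φ_F(s,t))ᵀ` is a transition matrix of
`F_im(t) = −α·I − F(t)ᵀ`, and it decays exponentially whenever `Φ_F` is bounded. -/
theorem canonical_realization_transition_matrix {ν : ℕ}
    (F : ℝ → Matrix (Fin ν) (Fin ν) ℝ) (hF : Continuous F)
    (ΦF : ℝ → ℝ → Matrix (Fin ν) (Fin ν) ℝ) (hΦF : IsTransitionMatrix F ΦF)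
    (α : ℝ) (hα : 0 < α)
    (Fim : ℝ → Matrix (Fin ν) (Fin ν) ℝ)
    (hFim : ∀ t, Fim t = (-α) • (1 : Matrix (Fin ν) (Fin ν) ℝ) - (F t)ᵀ)
    (Ψ : ℝ → ℝ → Matrix (Fin ν) (Fin ν) ℝ)
    (hΨ : ∀ t s, Ψ t s = Real.exp (-α * (t - s)) • (ΦF s t)ᵀ) :
    (∀ s, Ψ s s = 1) ∧
    (∀ t s r, Ψ t s * Ψ s r = Ψ t r) ∧
    (∀ s t, HasDerivAt (fun u => Ψ u s) (Fim t * Ψ t s) t) ∧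
    (∀ φ : ℝ, 0 < φ → (∀ s t, ‖(ΦF s t)ᵀ‖ ≤ φ) →
      ∀ t s, s ≤ t → ‖Ψ t s‖ ≤ φ * Real.exp (-α * (t - s))) := by
  refine ⟨?_, ?_, ?_, ?_⟩
  · intro s
    simp [hΨ, hΦF.refl]
  · intro t s r
    simp only [hΨ]
    rw [Matrix.smul_mul, Matrix.mul_smul, smul_smul, ← Real.exp_add,
      ← Matrix.transpose_mul, hΦF.comp]
    ring_nf
  · intro s t
    have hc : HasDerivAt (fun u : ℝ => Real.exp (-α * (u - s)))
        (Real.exp (-α * (t - s)) * (-α)) t := by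
      have h1 : HasDerivAt (fun u : ℝ => -α * (u - s)) (-α) t := by
        simpa using ((hasDerivAt_id t).sub_const s).const_mul (-α)
      simpa [Function.comp_def] using (Real.hasDerivAt_exp (-α * (t - s))).comp t h1
    have hm : HasDerivAt (fun u => (ΦF s u)ᵀ) (-(ΦF s t * F t))ᵀ t :=
      hasDerivAt_transpose (hΦF.hasDerivAt_snd s t)
    have h := hc.smul hm
    have key : (fun u => Ψ u s) = fun u => Real.exp (-α * (u - s)) • (ΦF s u)ᵀ := by
      funext u; exact hΨ u s
    rw [key]
    refine h.congr_deriv ?_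
    rw [hFim, hΨ]
    simp only [Matrix.transpose_neg, Matrix.transpose_mul, Matrix.sub_mul,
      Matrix.smul_mul, Matrix.mul_smul, Matrix.one_mul, smul_smul, smul_neg,
      mul_comm]
    module
  · intro φ hφ hb t s hst
    rw [hΨ]
    have : ‖Real.exp (-α * (t - s)) • (ΦF s t)ᵀ‖
        = Real.exp (-α * (t - s)) * ‖(ΦF s t)ᵀ‖ := by
      rw [norm_smul, Real.norm_eq_abs, abs_of_pos (Real.exp_pos _)]
    rw [this, mul_comm φ]
    exact mul_le_mul_of_nonneg_left (hb s t) (Real.exp_pos _).le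
end

section
/- Let m ∈ ℕ, let η₀, η_δ : ℝ → ℝ^{m×m} be continuous, let Φ_{η₀} be a transition matrix of η₀, and fix t₀ ∈ ℝ. Assume there are constants φ₁, φ₂, φ₃ > 0 with ‖Φ_{η₀}(t,s)‖ ≤ φ₁·e^{−φ₂(t−s)} for all t ≥ s and ‖η_δ(t)‖ ≤ φ₃ for all t. Define the Peano–Baker iterates I₀(t) := I and, for k ≥ 1, I_k(t) := ∫_{t₀}^{t} Φ_{η₀}(t₀,τ)·η_δ(τ)·Φ_{η₀}(τ,t₀)·I_{k−1}(τ) dτ. Then for every k ∈ ℕ and every t ≥ t₀, the series Δ_k(t) := Σ_{i=k+1}^{∞} Φ_{η₀}(t,t₀)·I_i(t) converges absolutely and satisfies ‖Δ_k(t)‖ ≤ φ₁·e^{−(φ₂ − φ₁φ₃)(t−t₀)}·(φ₁·φ₃·(t−t₀))^{k+1} / (k+1)!. -/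
open Matrix MeasureTheory Filter intervalIntegral

attribute [local instance] Matrix.frobeniusNormedAddCommGroup Matrix.frobeniusNormedSpace

/-- the tail `Δ_k(t) = Σ_{i ≥ k+1} Φ_{η₀}(t,t₀)·I_i(t)` of the Peano–Baker
series converges absolutely and satisfies
`‖Δ_k(t)‖ ≤ φ₁·e^{−(φ₂−φ₁φ₃)(t−t₀)}·(φ₁φ₃(t−t₀))^{k+1}/(k+1)!` for `t ≥ t₀`. -/
theorem peano_baker_tail_bound {m : ℕ}
    (η₀ ηδ : ℝ → Matrix (Fin m) (Fin m) ℝ)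
    (hη₀ : Continuous η₀) (hηδ : Continuous ηδ)
    (Φ₀ : ℝ → ℝ → Matrix (Fin m) (Fin m) ℝ) (hΦ₀ : IsTransitionMatrix η₀ Φ₀)
    (t₀ : ℝ)
    (φ₁ φ₂ φ₃ : ℝ) (hφ₁ : 0 < φ₁) (hφ₂ : 0 < φ₂) (hφ₃ : 0 < φ₃)
    (hdecay : ∀ t s, s ≤ t → ‖Φ₀ t s‖ ≤ φ₁ * Real.exp (-φ₂ * (t - s)))
    (hδbd : ∀ t, ‖ηδ t‖ ≤ φ₃)
    (I : ℕ → ℝ → Matrix (Fin m) (Fin m) ℝ)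
    (hI0 : ∀ t, I 0 t = 1)
    (hIrec : ∀ k t, I (k + 1) t = ∫ τ in t₀..t, Φ₀ t₀ τ * ηδ τ * Φ₀ τ t₀ * I k τ) :
    ∀ k : ℕ, ∀ t, t₀ ≤ t →
      (Summable fun i : ℕ => ‖Φ₀ t t₀ * I (k + 1 + i) t‖) ∧
      ‖∑' i : ℕ, Φ₀ t t₀ * I (k + 1 + i) t‖ ≤
        φ₁ * Real.exp (-(φ₂ - φ₁ * φ₃) * (t - t₀)) *
          (φ₁ * φ₃ * (t - t₀)) ^ (k + 1) / (Nat.factorial (k + 1)) := by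
  -- continuity facts
  have hcf : ∀ s, Continuous fun τ => Φ₀ τ s := fun s =>
    continuous_iff_continuousAt.2 fun τ => (hΦ₀.hasDerivAt_fst s τ).continuousAt
  have hcs : ∀ t, Continuous fun τ => Φ₀ t τ := fun t =>
    continuous_iff_continuousAt.2 fun τ => (hΦ₀.hasDerivAt_snd t τ).continuousAt
  have hIc : ∀ k, Continuous (I k) := by
    intro k
    induction k with
    | zero =>
      have : I 0 = fun _ => (1 : Matrix (Fin m) (Fin m) ℝ) := funext hI0
      rw [this]; exact continuous_const
    | succ k ih =>
      have hf : Continuous fun τ => Φ₀ t₀ τ * ηδ τ * Φ₀ τ t₀ * I k τ :=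
        (((hcs t₀).mul hηδ).mul (hcf t₀)).mul ih
      have : I (k + 1) = fun t => ∫ τ in t₀..t, Φ₀ t₀ τ * ηδ τ * Φ₀ τ t₀ * I k τ :=
        funext (hIrec k)
      rw [this]
      exact intervalIntegral.continuous_primitive
        (fun a b => hf.intervalIntegrable a b) t₀
  -- the key pointwise bound, by induction on k
  have key : ∀ k : ℕ, ∀ t, t₀ ≤ t → ‖Φ₀ t t₀ * I k t‖ ≤
      φ₁ * Real.exp (-φ₂ * (t - t₀)) * (φ₁ * φ₃) ^ k * (t - t₀) ^ k / k.factorial := by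
    intro k
    induction k with
    | zero =>
      intro t ht
      simpa [hI0 t] using hdecay t t₀ ht
    | succ k ih =>
      intro t ht
      -- pull the constant matrix into the integral
      set L : Matrix (Fin m) (Fin m) ℝ →L[ℝ] Matrix (Fin m) (Fin m) ℝ :=
        (LinearMap.mulLeft ℝ (Φ₀ t t₀)).toContinuousLinearMap with hL
      have hfint :=
        ((((hcs t₀).mul hηδ).mul (hcf t₀)).mul (hIc k)).intervalIntegrable (μ := volume) t₀ t
      have hpull : Φ₀ t t₀ * I (k + 1) t
          = ∫ τ in t₀..t, Φ₀ t τ * ηδ τ * (Φ₀ τ t₀ * I k τ) := by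
        have h1 : Φ₀ t t₀ * I (k + 1) t
            = ∫ τ in t₀..t, Φ₀ t t₀ * (Φ₀ t₀ τ * ηδ τ * Φ₀ τ t₀ * I k τ) := by
          have h2 := L.intervalIntegral_comp_comm hfint
          rw [hIrec k t]
          exact h2.symm
        rw [h1]
        congr 1
        funext τ
        rw [show Φ₀ t t₀ * (Φ₀ t₀ τ * ηδ τ * Φ₀ τ t₀ * I k τ)
            = (Φ₀ t t₀ * Φ₀ t₀ τ) * ηδ τ * (Φ₀ τ t₀ * I k τ) by
            simp only [mul_assoc],
          hΦ₀.comp t t₀ τ]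
      set K : ℝ := φ₁ * φ₃ * (φ₁ * Real.exp (-φ₂ * (t - t₀)) * (φ₁ * φ₃) ^ k / k.factorial)
        with hK
      have hKnn : 0 ≤ K := by positivity
      have hbd : ∀ τ ∈ Set.Ioc t₀ t,
          ‖Φ₀ t τ * ηδ τ * (Φ₀ τ t₀ * I k τ)‖ ≤ K * (τ - t₀) ^ k := by
        intro τ hτ
        have h1 : ‖Φ₀ t τ * ηδ τ * (Φ₀ τ t₀ * I k τ)‖
            ≤ ‖Φ₀ t τ‖ * ‖ηδ τ‖ * ‖Φ₀ τ t₀ * I k τ‖ :=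
          (Matrix.frobenius_norm_mul _ _).trans
            (mul_le_mul_of_nonneg_right (Matrix.frobenius_norm_mul _ _) (norm_nonneg _))
        have h2 := hdecay t τ hτ.2
        have h3 := hδbd τ
        have h4 := ih τ hτ.1.le
        calc ‖Φ₀ t τ * ηδ τ * (Φ₀ τ t₀ * I k τ)‖
            ≤ ‖Φ₀ t τ‖ * ‖ηδ τ‖ * ‖Φ₀ τ t₀ * I k τ‖ := h1
          _ ≤ (φ₁ * Real.exp (-φ₂ * (t - τ))) * φ₃ *
              (φ₁ * Real.exp (-φ₂ * (τ - t₀)) * (φ₁ * φ₃) ^ k * (τ - t₀) ^ k / k.factorial) := by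
              gcongr
          _ = K * (τ - t₀) ^ k := by
              rw [hK]
              rw [show (-φ₂ * (t - τ)) = (-φ₂ * (t - t₀)) + (-(-φ₂ * (τ - t₀))) by ring]
              rw [Real.exp_add, Real.exp_neg]
              field_simp
      have hnorm : ‖Φ₀ t t₀ * I (k + 1) t‖ ≤ |∫ τ in t₀..t, K * (τ - t₀) ^ k| := by
        rw [hpull]
        apply intervalIntegral.norm_integral_le_abs_of_norm_le
        · refine (ae_restrict_iff' measurableSet_uIoc).2 (ae_of_all _ fun τ hτ => ?_)
          rw [Set.uIoc_of_le ht] at hτ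
          exact hbd τ hτ
        · exact ((continuous_const.mul
            (((continuous_id.sub continuous_const).pow k))).intervalIntegrable t₀ t)
      have hint : (∫ τ in t₀..t, K * (τ - t₀) ^ k) = K * ((t - t₀) ^ (k + 1) / (k + 1)) := by
        rw [intervalIntegral.integral_const_mul]
        congr 1
        rw [intervalIntegral.integral_comp_sub_right (fun x => x ^ k) t₀, sub_self,
          integral_pow]
        simp
      have hnn : 0 ≤ K * ((t - t₀) ^ (k + 1) / (k + 1)) := by
        have : (0:ℝ) ≤ t - t₀ := sub_nonneg.2 ht
        positivity
      rw [hint, abs_of_nonneg hnn] at hnorm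
      refine hnorm.trans (le_of_eq ?_)
      have hk : (k.factorial : ℝ) ≠ 0 := Nat.cast_ne_zero.2 k.factorial_ne_zero
      have hk1 : ((k : ℝ) + 1) ≠ 0 := by positivity
      rw [Nat.factorial_succ, hK]
      push_cast
      field_simp
      ring
  -- now the tail estimate
  intro k t ht
  have hΔ : (0:ℝ) ≤ t - t₀ := sub_nonneg.2 ht
  set x : ℝ := φ₁ * φ₃ * (t - t₀) with hx
  have hxnn : 0 ≤ x := by positivity
  set D : ℝ := φ₁ * Real.exp (-φ₂ * (t - t₀)) * x ^ (k + 1) / (k + 1).factorial with hD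
  have hDnn : 0 ≤ D := by positivity
  have hc : ∀ i : ℕ, ‖Φ₀ t t₀ * I (k + 1 + i) t‖ ≤ D * (x ^ i / i.factorial) := by
    intro i
    refine (key (k + 1 + i) t ht).trans ?_
    have e1 : φ₁ * Real.exp (-φ₂ * (t - t₀)) * (φ₁ * φ₃) ^ (k + 1 + i) * (t - t₀) ^ (k + 1 + i)
        / (k + 1 + i).factorial
        = φ₁ * Real.exp (-φ₂ * (t - t₀)) * (x ^ (k + 1) * x ^ i) / (k + 1 + i).factorial := by
      simp only [hx, mul_pow]
      ring
    rw [e1]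
    have hfle : (((k + 1).factorial * i.factorial : ℕ) : ℝ) ≤ ((k + 1 + i).factorial : ℝ) := by
      exact_mod_cast Nat.le_of_dvd (k + 1 + i).factorial_pos
        (Nat.factorial_mul_factorial_dvd_factorial_add (k + 1) i)
    have h2 : φ₁ * Real.exp (-φ₂ * (t - t₀)) * (x ^ (k + 1) * x ^ i)
          / ((k + 1 + i).factorial : ℝ)
        ≤ φ₁ * Real.exp (-φ₂ * (t - t₀)) * (x ^ (k + 1) * x ^ i)
          / (((k + 1).factorial * i.factorial : ℕ) : ℝ) := by
      apply div_le_div_of_nonneg_left (by positivity) (by positivity) hfle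
    refine h2.trans (le_of_eq ?_)
    rw [hD]
    push_cast
    have hk1 : ((k + 1).factorial : ℝ) ≠ 0 := Nat.cast_ne_zero.2 (k + 1).factorial_ne_zero
    have hki : (i.factorial : ℝ) ≠ 0 := Nat.cast_ne_zero.2 i.factorial_ne_zero
    field_simp
  have hcsum : Summable fun i : ℕ => D * (x ^ i / i.factorial) :=
    (Real.summable_pow_div_factorial x).mul_left D
  have hsum : Summable fun i : ℕ => ‖Φ₀ t t₀ * I (k + 1 + i) t‖ :=
    Summable.of_nonneg_of_le (fun i => norm_nonneg _) hc hcsum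
  refine ⟨hsum, ?_⟩
  have hexp : (∑' i : ℕ, x ^ i / i.factorial) = Real.exp x := by
    rw [Real.exp_eq_exp_ℝ, NormedSpace.exp_eq_tsum_div]
  calc ‖∑' i : ℕ, Φ₀ t t₀ * I (k + 1 + i) t‖
      ≤ ∑' i : ℕ, ‖Φ₀ t t₀ * I (k + 1 + i) t‖ := norm_tsum_le_tsum_norm hsum
    _ ≤ ∑' i : ℕ, D * (x ^ i / i.factorial) := Summable.tsum_le_tsum hc hsum hcsum
    _ = D * Real.exp x := by rw [tsum_mul_left, hexp]
    _ = φ₁ * Real.exp (-(φ₂ - φ₁ * φ₃) * (t - t₀)) *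
          (φ₁ * φ₃ * (t - t₀)) ^ (k + 1) / (Nat.factorial (k + 1)) := by
        rw [hD, hx, show -(φ₂ - φ₁ * φ₃) * (t - t₀)
            = (-φ₂ * (t - t₀)) + φ₁ * φ₃ * (t - t₀) by ring, Real.exp_add]
        ring
end

section
/- Let m ∈ ℕ, let C, L, ω > 0, let (Y_i)_{i∈ℕ} be complex m×m matrices with ‖Y_i‖ ≤ C·L^i for all i, let (k_n)_{n∈ℕ} be a sequence of positive reals with k_n → ∞, let b ∈ ℂ^m, and let (e_n)_{n∈ℕ} be vectors in ℂ^m such that k_n^j · ‖e_n‖ → 0 as n → ∞ for every j ∈ ℕ. Suppose that for every n with k_n·ω > L, the (absolutely convergent) series identity Σ_{i=0}^{∞} (𝒾·k_n·ω)^{−(i+1)} · Y_i · (b + e_n) = 0 holds, where 𝒾 is the imaginary unit. Then Y_i · b = 0 for every i ∈ ℕ. -/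
open Matrix Filter

attribute [local instance] Matrix.frobeniusNormedAddCommGroup Matrix.frobeniusNormedSpace

/-- Euclidean norm on `Fin m → ℂ`. -/
noncomputable def euclNormC {m : ℕ} (v : Fin m → ℂ) : ℝ :=
  Real.sqrt (∑ i, ‖v i‖ ^ 2)

/-- Frobenius norm dominates entries. -/
lemma entry_le_frobenius {m : ℕ} (A : Matrix (Fin m) (Fin m) ℂ) (i j : Fin m) :
    ‖A i j‖ ≤ ‖A‖ := by
  rw [Matrix.frobenius_norm_def, ← Real.sqrt_eq_rpow]
  refine Real.le_sqrt_of_sq_le ?_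
  calc ‖A i j‖ ^ 2 ≤ ∑ j', ‖A i j'‖ ^ (2 : ℝ) := by
        rw [← Real.rpow_natCast (‖A i j‖) 2]
        push_cast
        exact Finset.single_le_sum (f := fun j' => ‖A i j'‖ ^ (2:ℝ))
          (fun j' _ => Real.rpow_nonneg (norm_nonneg _) _) (Finset.mem_univ j)
    _ ≤ ∑ i', ∑ j', ‖A i' j'‖ ^ (2 : ℝ) :=
        Finset.single_le_sum (f := fun i' => ∑ j', ‖A i' j'‖ ^ (2:ℝ))
          (fun i' _ => Finset.sum_nonneg fun j' _ => Real.rpow_nonneg (norm_nonneg _) _)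
          (Finset.mem_univ i)

/-- Compatibility of the Frobenius matrix norm with the sup norm on vectors. -/
lemma norm_mulVec_le {m : ℕ} (A : Matrix (Fin m) (Fin m) ℂ) (v : Fin m → ℂ) :
    ‖A *ᵥ v‖ ≤ (m : ℝ) * ‖A‖ * ‖v‖ := by
  have hnn : (0:ℝ) ≤ (m : ℝ) * ‖A‖ * ‖v‖ := by positivity
  rw [pi_norm_le_iff_of_nonneg hnn]
  intro i
  calc ‖∑ j, A i j * v j‖ ≤ ∑ j, ‖A i j * v j‖ := norm_sum_le _ _
    _ ≤ ∑ _j : Fin m, ‖A‖ * ‖v‖ := by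
        refine Finset.sum_le_sum fun j _ => ?_
        rw [norm_mul]
        exact mul_le_mul (entry_le_frobenius A i j) (norm_le_pi_norm v j)
          (norm_nonneg _) (norm_nonneg _)
    _ = (m : ℝ) * ‖A‖ * ‖v‖ := by simp [Finset.sum_const, mul_assoc]

lemma sup_le_euclNormC {m : ℕ} (v : Fin m → ℂ) : ‖v‖ ≤ euclNormC v := by
  have hnn : (0:ℝ) ≤ euclNormC v := Real.sqrt_nonneg _
  rw [pi_norm_le_iff_of_nonneg hnn]
  intro i
  exact Real.le_sqrt_of_sq_le (Finset.single_le_sum (f := fun j => ‖v j‖ ^ 2)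
    (fun j _ => sq_nonneg _) (Finset.mem_univ i))

/-- Geometric bound for a tsum. -/
lemma norm_tsum_geom {V : Type*} [NormedAddCommGroup V] [CompleteSpace V]
    (f : ℕ → V) (c r : ℝ) (hr0 : 0 ≤ r) (hr1 : r < 1)
    (hf : ∀ j, ‖f j‖ ≤ c * r ^ j) :
    Summable f ∧ ‖∑' j, f j‖ ≤ c / (1 - r) := by
  have hg : HasSum (fun j => c * r ^ j) (c / (1 - r)) := by
    simpa [div_eq_mul_inv] using (hasSum_geometric_of_lt_one hr0 hr1).mul_left c
  exact ⟨Summable.of_norm_bounded hg.summable hf, tsum_of_norm_bounded hg hf⟩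

/-- if the geometrically bounded matrix family `(Y_i)` satisfies the
vanishing series identities `Σ_i (𝒾 k_n ω)^{−(i+1)}·Y_i·(b + e_n) = 0` along a sequence
`k_n → ∞` with perturbations `e_n` decaying faster than any power of `k_n`, then
`Y_i·b = 0` for every `i`. -/
theorem vanishing_laurent_series_forces_annihilation {m : ℕ}
    (C L ω : ℝ) (hC : 0 < C) (hL : 0 < L) (hω : 0 < ω)
    (Y : ℕ → Matrix (Fin m) (Fin m) ℂ) (hY : ∀ i, ‖Y i‖ ≤ C * L ^ i)
    (k : ℕ → ℝ) (hkpos : ∀ n, 0 < k n) (hk : Tendsto k atTop atTop)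
    (b : Fin m → ℂ) (e : ℕ → Fin m → ℂ)
    (he : ∀ j : ℕ, Tendsto (fun n => k n ^ j * euclNormC (e n)) atTop (nhds 0))
    (hser : ∀ n : ℕ, L < k n * ω →
      ∑' i : ℕ, ((Complex.I * (k n : ℂ) * (ω : ℂ)) ^ (i + 1))⁻¹ • (Y i *ᵥ (b + e n)) = 0) :
    ∀ i : ℕ, Y i *ᵥ b = 0 := by
  intro i
  induction i using Nat.strong_induction_on with
  | _ i ih =>
  set D1 : ℝ := 2 * m * C * ‖b‖ * L ^ (i+1) / ω with hD1
  set D2 : ℝ := 2 * m * C * ω ^ i with hD2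
  have hD1nn : 0 ≤ D1 := by positivity
  have hD2nn : 0 ≤ D2 := by positivity
  have hbound : ∀ n : ℕ, 2 * L ≤ k n * ω →
      ‖Y i *ᵥ b‖ ≤ D1 * (k n)⁻¹ + D2 * (k n ^ i * euclNormC (e n)) := by
    intro n hn
    set q : ℝ := k n * ω with hqdef
    have hq0 : 0 < q := mul_pos (hkpos n) hω
    have hLq : L < q := lt_of_lt_of_le (by linarith) hn
    set z : ℂ := Complex.I * (k n : ℂ) * (ω : ℂ) with hzdef
    have hz : ‖z‖ = q := by
      rw [hzdef, norm_mul, norm_mul]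
      simp [Complex.norm_real, abs_of_pos (hkpos n), abs_of_pos hω]
      exact hqdef.symm
    have hz0 : z ≠ 0 := by
      intro h
      rw [h, norm_zero] at hz
      exact absurd hz.symm (ne_of_gt hq0)
    have hr0 : (0:ℝ) ≤ L / q := by positivity
    have hr1 : L / q < 1 := (div_lt_one hq0).mpr hLq
    set g : ℕ → (Fin m → ℂ) := fun j => ((z ^ (j+1))⁻¹ • (Y j *ᵥ b)) with hgdef
    set h : ℕ → (Fin m → ℂ) := fun j => ((z ^ (j+1))⁻¹ • (Y j *ᵥ (e n))) with hhdef
    -- generic coefficient bound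
    have hcoeff : ∀ (w : Fin m → ℂ) (j : ℕ),
        ‖(z ^ (j+1))⁻¹ • (Y j *ᵥ w)‖ ≤ (m * C * ‖w‖ / q) * (L / q) ^ j := by
      intro w j
      rw [norm_smul, norm_inv, norm_pow, hz]
      have h1 : ‖Y j *ᵥ w‖ ≤ (m : ℝ) * (C * L ^ j) * ‖w‖ :=
        le_trans (norm_mulVec_le _ _) (by
          have := hY j
          gcongr)
      calc (q ^ (j+1))⁻¹ * ‖Y j *ᵥ w‖ ≤ (q ^ (j+1))⁻¹ * ((m : ℝ) * (C * L ^ j) * ‖w‖) := by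
            gcongr
        _ = (m * C * ‖w‖ / q) * (L / q) ^ j := by
            rw [div_pow]
            field_simp
            ring
    have hgS : Summable g :=
      (norm_tsum_geom g _ _ hr0 hr1 (hcoeff b)).1
    have hhS : Summable h :=
      (norm_tsum_geom h _ _ hr0 hr1 (hcoeff (e n))).1
    have hEb : ‖∑' j, h j‖ ≤ (m * C * ‖e n‖ / q) / (1 - L / q) :=
      (norm_tsum_geom h _ _ hr0 hr1 (hcoeff (e n))).2
    -- tail bound
    have htail : ∀ j : ℕ, ‖g (j + (i+1))‖ ≤
        (m * C * ‖b‖ * L ^ (i+1) / q ^ (i+2)) * (L / q) ^ j := by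
      intro j
      calc ‖g (j + (i+1))‖ ≤ (m * C * ‖b‖ / q) * (L / q) ^ (j + (i+1)) := hcoeff b _
        _ = (m * C * ‖b‖ * L ^ (i+1) / q ^ (i+2)) * (L / q) ^ j := by
            have hq' : q ≠ 0 := hq0.ne'
            rw [pow_add, div_pow]
            field_simp
            have e1 : q⁻¹ ^ i * q ^ i = 1 := by rw [← mul_pow, inv_mul_cancel₀ hq', one_pow]
            have e2 : q⁻¹ * q = 1 := inv_mul_cancel₀ hq'
            linear_combination ((m:ℝ) * ‖b‖ * L * L ^ i * q * (q⁻¹ * q)) * e1 + ((m:ℝ) * ‖b‖ * L * L ^ i * q) * e2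
    have hRb : ‖∑' j, g (j + (i+1))‖ ≤
        (m * C * ‖b‖ * L ^ (i+1) / q ^ (i+2)) / (1 - L / q) :=
      (norm_tsum_geom _ _ _ hr0 hr1 htail).2
    -- series identity
    have hser0 : (∑' j, g j) + (∑' j, h j) = 0 := by
      rw [← Summable.tsum_add hgS hhS, ← hser n hLq]
      exact tsum_congr fun j => by
        rw [hgdef, hhdef]
        simp only [← hzdef, Matrix.mulVec_add, smul_add]
    have hsplit : (∑' j, g j) = g i + ∑' j, g (j + (i+1)) := by
      have h1 := Summable.sum_add_tsum_nat_add (i+1) hgS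
      have h2 : ∑ j ∈ Finset.range (i+1), g j = g i := by
        rw [Finset.sum_range_succ]
        have h3 : ∑ j ∈ Finset.range i, g j = 0 :=
          Finset.sum_eq_zero fun j hj => by
            rw [hgdef]
            simp [ih j (Finset.mem_range.mp hj)]
        rw [h3, zero_add]
      rw [← h1, h2]
    have hgi : g i = -((∑' j, g (j + (i+1))) + ∑' j, h j) := by
      rw [hsplit] at hser0
      rw [add_assoc] at hser0
      exact eq_neg_of_add_eq_zero_left hser0
    have hYib : Y i *ᵥ b = (z ^ (i+1)) • g i := by
      rw [hgdef]
      simp [smul_smul, mul_inv_cancel₀ (pow_ne_zero (i+1) hz0)]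
    have hhalf : (1:ℝ)/2 ≤ 1 - L / q := by
      have : L / q ≤ 1/2 := by
        rw [div_le_iff₀ hq0]
        linarith
      linarith
    have hnormYib : ‖Y i *ᵥ b‖ ≤
        q ^ (i+1) * ((m * C * ‖b‖ * L ^ (i+1) / q ^ (i+2)) / (1 - L / q)
          + (m * C * ‖e n‖ / q) / (1 - L / q)) := by
      rw [hYib, norm_smul, norm_pow, hz, hgi, norm_neg]
      gcongr
      exact le_trans (norm_add_le _ _) (by gcongr)
    have hstep2 : q ^ (i+1) * ((m * C * ‖b‖ * L ^ (i+1) / q ^ (i+2)) / (1 - L / q)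
          + (m * C * ‖e n‖ / q) / (1 - L / q)) ≤
        q ^ (i+1) * (2 * (m * C * ‖b‖ * L ^ (i+1) / q ^ (i+2))
          + 2 * (m * C * ‖e n‖ / q)) := by
      gcongr q ^ (i+1) * (?_ + ?_)
      · calc (m * C * ‖b‖ * L ^ (i+1) / q ^ (i+2)) / (1 - L / q)
            ≤ (m * C * ‖b‖ * L ^ (i+1) / q ^ (i+2)) / (1/2) := by
              gcongr
          _ = 2 * (m * C * ‖b‖ * L ^ (i+1) / q ^ (i+2)) := by ring
      · calc (m * C * ‖e n‖ / q) / (1 - L / q)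
            ≤ (m * C * ‖e n‖ / q) / (1/2) := by
              gcongr
          _ = 2 * (m * C * ‖e n‖ / q) := by ring
    have hstep3 : q ^ (i+1) * (2 * (m * C * ‖b‖ * L ^ (i+1) / q ^ (i+2))
          + 2 * (m * C * ‖e n‖ / q)) = D1 * (k n)⁻¹ + D2 * (k n ^ i * ‖e n‖) := by
      have hk0 : k n ≠ 0 := ne_of_gt (hkpos n)
      have hω0 : ω ≠ 0 := ne_of_gt hω
      rw [hD1, hD2, hqdef]
      field_simp [mul_pow, pow_succ]
      ring
    have hstep4 : D2 * (k n ^ i * ‖e n‖) ≤ D2 * (k n ^ i * euclNormC (e n)) := by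
      gcongr
      · exact pow_nonneg (le_of_lt (hkpos n)) i
      · exact sup_le_euclNormC (e n)
    calc ‖Y i *ᵥ b‖ ≤ _ := hnormYib
      _ ≤ _ := hstep2
      _ = D1 * (k n)⁻¹ + D2 * (k n ^ i * ‖e n‖) := hstep3
      _ ≤ D1 * (k n)⁻¹ + D2 * (k n ^ i * euclNormC (e n)) := by linarith
  -- limit argument
  have hlim : Tendsto (fun n => D1 * (k n)⁻¹ + D2 * (k n ^ i * euclNormC (e n)))
      atTop (nhds 0) := by
    have ha : Tendsto (fun n => (k n)⁻¹) atTop (nhds 0) := hk.inv_tendsto_atTop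
    have := (ha.const_mul D1).add ((he i).const_mul D2)
    simpa using this
  have hev : ∀ᶠ n in atTop, ‖Y i *ᵥ b‖ ≤ D1 * (k n)⁻¹ + D2 * (k n ^ i * euclNormC (e n)) := by
    filter_upwards [hk.eventually_ge_atTop (2 * L / ω)] with n hn
    exact hbound n (by rwa [div_le_iff₀ hω] at hn)
  have hle0 : ‖Y i *ᵥ b‖ ≤ 0 := ge_of_tendsto hlim hev
  exact norm_le_zero_iff.mp hle0
end

section
/- Let ρ, N ∈ ℕ, let S : ℝ → ℝ^{ρ×ρ} be continuous with transition matrix Φ_S, let R₀, R₁, …, R_N : ℝ → ℝ^{1×ρ} be continuous, and fix t₀ ∈ ℝ. Define F(t) := I_{N+1} ⊗ S(t) (an (N+1)ρ × (N+1)ρ matrix, where ⊗ is the Kronecker product), H(t) := the 1×(N+1)ρ row block [R₀(t) R₁(t) ⋯ R_N(t)], and for μ = (μ₁,…,μ_N) ∈ ℝ^N let Σ₀(μ) := (1, μ₁, …, μ_N)ᵀ ⊗ I_ρ ∈ ℝ^{(N+1)ρ×ρ}. Then (i) Φ_F(t,s) := I_{N+1} ⊗ Φ_S(t,s) is a transition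 matrix of F, and (ii) for every μ ∈ ℝ^N and every t ∈ ℝ, (R₀(t) + Σ_{i=1}^{N} μ_i·R_i(t)) · Φ_S(t,t₀) = H(t) · Φ_F(t,t₀) · Σ₀(μ). Hence every feedforward gain depending affinely on the uncertain parameter μ satisfies the propagation condition with the single parameter-independent internal model (F, H). -/
open Matrix Kronecker MeasureTheory Filter

attribute [local instance] Matrix.frobeniusNormedAddCommGroup Matrix.frobeniusNormedSpace

private noncomputable def kronCLM (ρ N : ℕ) :
    Matrix (Fin ρ) (Fin ρ) ℝ →L[ℝ] Matrix (Fin (N + 1) × Fin ρ) (Fin (N + 1) × Fin ρ) ℝ :=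
  LinearMap.toContinuousLinearMap
    { toFun := fun X => (1 : Matrix (Fin (N + 1)) (Fin (N + 1)) ℝ) ⊗ₖ X
      map_add' := fun X Y => Matrix.kronecker_add _ _ _
      map_smul' := fun r X => Matrix.kronecker_smul r _ _ }

private lemma kron_hasDerivAt {ρ N : ℕ} {f : ℝ → Matrix (Fin ρ) (Fin ρ) ℝ}
    {f' : Matrix (Fin ρ) (Fin ρ) ℝ} {t : ℝ} (hf : HasDerivAt f f' t) :
    HasDerivAt (fun u => (1 : Matrix (Fin (N + 1)) (Fin (N + 1)) ℝ) ⊗ₖ f u)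
      ((1 : Matrix (Fin (N + 1)) (Fin (N + 1)) ℝ) ⊗ₖ f') t :=
  (kronCLM ρ N).hasFDerivAt.comp_hasDerivAt t hf

/-- the block internal model `F = I_{N+1} ⊗ S`,
`H = [R₀ R₁ ⋯ R_N]` satisfies: (i) `I_{N+1} ⊗ Φ_S` is a transition matrix of `F`, and
(ii) every affine-in-`μ` feedforward gain `R₀ + Σ μ_i R_i` satisfies the propagation
condition with initial data `Σ₀(μ) = (1, μ)ᵀ ⊗ I_ρ`. -/
theorem affine_uncertainty_internal_model {ρ N : ℕ}
    (S : ℝ → Matrix (Fin ρ) (Fin ρ) ℝ) (hS : Continuous S)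
    (ΦS : ℝ → ℝ → Matrix (Fin ρ) (Fin ρ) ℝ) (hΦS : IsTransitionMatrix S ΦS)
    (R : Fin (N + 1) → ℝ → Matrix (Fin 1) (Fin ρ) ℝ) (hR : ∀ j, Continuous (R j))
    (t₀ : ℝ)
    (H : ℝ → Matrix (Fin 1) (Fin (N + 1) × Fin ρ) ℝ)
    (hH : ∀ t, H t = Matrix.of fun i jl => R jl.1 t i jl.2) :
    IsTransitionMatrix
      (fun t => (1 : Matrix (Fin (N + 1)) (Fin (N + 1)) ℝ) ⊗ₖ S t)
      (fun t s => (1 : Matrix (Fin (N + 1)) (Fin (N + 1)) ℝ) ⊗ₖ ΦS t s) ∧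
    (∀ μ : Fin N → ℝ, ∀ t : ℝ,
      (R 0 t + ∑ i : Fin N, μ i • R i.succ t) * ΦS t t₀ =
        H t * ((1 : Matrix (Fin (N + 1)) (Fin (N + 1)) ℝ) ⊗ₖ ΦS t t₀) *
          (Matrix.of fun (jl : Fin (N + 1) × Fin ρ) (l' : Fin ρ) =>
            (Fin.cons 1 μ : Fin (N + 1) → ℝ) jl.1 *
              (1 : Matrix (Fin ρ) (Fin ρ) ℝ) jl.2 l')) := by
  constructor
  · constructor
    · intro s; rw [hΦS.refl, Matrix.one_kronecker_one]
    · intro t s r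
      rw [← Matrix.mul_kronecker_mul, hΦS.comp, one_mul]
    · intro s t
      have := kron_hasDerivAt (N := N) (hΦS.hasDerivAt_fst s t)
      rw [← Matrix.mul_kronecker_mul, one_mul]
      exact this
    · intro t s
      have := kron_hasDerivAt (N := N) (hΦS.hasDerivAt_snd t s)
      have h2 : (1 : Matrix (Fin (N + 1)) (Fin (N + 1)) ℝ) ⊗ₖ (-(ΦS t s * S s)) =
          -((1 : Matrix (Fin (N + 1)) (Fin (N + 1)) ℝ) ⊗ₖ ΦS t s *
            (1 : Matrix (Fin (N + 1)) (Fin (N + 1)) ℝ) ⊗ₖ S s) := by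
        ext ⟨a, b⟩ ⟨c, d⟩
        simp [← Matrix.mul_kronecker_mul, Matrix.kroneckerMap_apply, mul_neg]
      rwa [h2] at this
  · intro μ t
    have key : ∀ (j : Fin (N + 1)) (l : Fin ρ) (i : Fin 1),
        (H t * ((1 : Matrix (Fin (N + 1)) (Fin (N + 1)) ℝ) ⊗ₖ ΦS t t₀)) i (j, l) =
          (R j t * ΦS t t₀) i l := by
      intro j l i
      simp only [hH, Matrix.mul_apply, Matrix.kroneckerMap_apply, Matrix.of_apply,
        Fintype.sum_prod_type]
      rw [Finset.sum_comm]
      simp [Matrix.one_apply, ite_mul, mul_ite, mul_zero, zero_mul, mul_comm, mul_left_comm]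
    ext i l'
    conv_rhs => rw [Matrix.mul_apply]
    simp only [Matrix.of_apply, Fintype.sum_prod_type]
    simp only [key, Matrix.one_apply, mul_ite, mul_one, mul_zero, ite_mul, zero_mul,
      Finset.sum_ite_eq', Finset.mem_univ, if_true]
    rw [Fin.sum_univ_succ (f := fun j => (R j t * ΦS t t₀) i l' * (Fin.cons 1 μ : Fin (N + 1) → ℝ) j)]
    simp only [Fin.cons_zero, Fin.cons_succ, mul_one, Matrix.add_mul, Matrix.sum_mul,
      Matrix.smul_mul, Matrix.add_apply, Matrix.sum_apply, Matrix.smul_apply, smul_eq_mul]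
    congr 1
    exact Finset.sum_congr rfl fun j _ => mul_comm _ _
end
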